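/- Suppose α(q) = −(1/2)Λq with Λ constant, invertible and antisymmetric, the Runge–Kutta matrix A = (a_{ij}) is invertible, the coefficients satisfy b_i a_{ij} + b_j a_{ji} = b_i b_j for all i,j, and p = −(1/2)Λq. Then the Runge–Kutta scheme is a Poisson integrator for the Poisson system q̇ = Λ^{-1}∇H(q) with constant structure matrix Λ^{-1}: the induced one-step map F_h: q ↦ q̄ (defined for h small enough to be differentiable) satisfies DF_h(q) Λ^{-1} DF_h(q)ᵀ = Λ^{-1}. -/

import Mathlib

/-!
Write `D_i` and `S_i` for the Jacobians in `q` of the stage velocities `Q̇_i` and stages `Q_i`.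
Differentiating `ΛQ̇_i = ∇H(Q_i)` gives `ΛD_i = ∇²H(Q_i) S_i`; since the Hessian is symmetric and
`Λ` antisymmetric, `D_iᵀΛS_i + S_iᵀΛD_i = 0`. For `M = DF_h(q) = 1 + h Σ b_j D_j`, Cooper's
identity, valid because `b_i a_ij + b_j a_ji = b_i b_j`, reads
`MᵀΛM = Λ + h Σ_i b_i (D_iᵀΛS_i + S_iᵀΛD_i)`, so `MᵀΛM = Λ`, which is equivalent to
`MΛ⁻¹Mᵀ = Λ⁻¹`.
-/

open Matrix

/-- The Jacobian matrix `(Df)_{μν} = ∂f_μ/∂q^ν` of a map `f : ℝ^n → ℝ^n`. -/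
noncomputable def jac {n : ℕ} (f : (Fin n → ℝ) → (Fin n → ℝ)) (q : Fin n → ℝ) :
    Matrix (Fin n) (Fin n) ℝ :=
  fun μ ν => fderiv ℝ f q (Pi.single ν 1) μ

/-- The gradient `∇H` of a function `H : ℝ^n → ℝ`. -/
noncomputable def grad {n : ℕ} (H : (Fin n → ℝ) → ℝ) (q : Fin n → ℝ) : Fin n → ℝ :=
  fun μ => fderiv ℝ H q (Pi.single μ 1)

section Jacobian

variable {n : ℕ} {f g : (Fin n → ℝ) → Fin n → ℝ} {q : Fin n → ℝ}

lemma jac_eq_toMatrix' (f : (Fin n → ℝ) → Fin n → ℝ) (q : Fin n → ℝ) :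
    jac f q = LinearMap.toMatrix' (fderiv ℝ f q : (Fin n → ℝ) →ₗ[ℝ] Fin n → ℝ) := by
  ext μ ν
  rw [LinearMap.toMatrix'_apply]
  rfl

lemma HasFDerivAt.jac_eq {f' : (Fin n → ℝ) →L[ℝ] Fin n → ℝ} (hf : HasFDerivAt f f' q) :
    jac f q = LinearMap.toMatrix' (f' : (Fin n → ℝ) →ₗ[ℝ] Fin n → ℝ) := by
  rw [jac_eq_toMatrix', hf.fderiv]

lemma jac_comp (hf : DifferentiableAt ℝ f (g q)) (hg : DifferentiableAt ℝ g q) :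
    jac (fun x => f (g x)) q = jac f (g q) * jac g q := by
  change jac (f ∘ g) q = _
  rw [(hf.hasFDerivAt.comp q hg.hasFDerivAt).jac_eq, jac_eq_toMatrix', jac_eq_toMatrix',
    ContinuousLinearMap.toLinearMap_comp, LinearMap.toMatrix'_comp]

lemma jac_mulVec (M : Matrix (Fin n) (Fin n) ℝ) (hf : DifferentiableAt ℝ f q) :
    jac (fun x => M *ᵥ f x) q = M * jac f q := by
  change jac (M.mulVecLin.toContinuousLinearMap ∘ f) q = _
  rw [(M.mulVecLin.toContinuousLinearMap.hasFDerivAt.comp q hf.hasFDerivAt).jac_eq,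
    jac_eq_toMatrix', ContinuousLinearMap.toLinearMap_comp, LinearMap.toMatrix'_comp,
    LinearMap.coe_toContinuousLinearMap, ← Matrix.toLin'_apply', LinearMap.toMatrix'_toLin']

lemma jac_add_smul_sum {s : ℕ} {G : Fin s → (Fin n → ℝ) → Fin n → ℝ}
    (hG : ∀ j, DifferentiableAt ℝ (G j) q) (h : ℝ) (c : Fin s → ℝ) :
    jac (fun x => x + h • ∑ j, c j • G j x) q = 1 + h • ∑ j, c j • jac (G j) q := by
  have hderiv : HasFDerivAt (fun x => x + h • ∑ j, c j • G j x)
      (ContinuousLinearMap.id ℝ _ + h • ∑ j, c j • fderiv ℝ (G j) q) q :=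
    (hasFDerivAt_id q).add
      ((HasFDerivAt.fun_sum fun j _ => (hG j).hasFDerivAt.const_smul (c j)).const_smul h)
  simp [hderiv.jac_eq, jac_eq_toMatrix']

end Jacobian

section Gradient

variable {n : ℕ} {H : (Fin n → ℝ) → ℝ}

lemma grad_eq_comp_fderiv (H : (Fin n → ℝ) → ℝ) :
    grad H = (ContinuousLinearMap.pi fun μ =>
      ContinuousLinearMap.apply ℝ ℝ (Pi.single μ 1 : Fin n → ℝ)) ∘ fderiv ℝ H :=
  rfl

lemma hasFDerivAt_grad (hH : ContDiff ℝ 2 H) (x : Fin n → ℝ) :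
    HasFDerivAt (grad H) ((ContinuousLinearMap.pi fun μ =>
      ContinuousLinearMap.apply ℝ ℝ (Pi.single μ 1 : Fin n → ℝ)) ∘L
        fderiv ℝ (fderiv ℝ H) x) x := by
  rw [grad_eq_comp_fderiv]
  exact (ContinuousLinearMap.hasFDerivAt _).comp x
    ((hH.fderiv_right one_add_one_eq_two.le).differentiable one_ne_zero x).hasFDerivAt

lemma jac_grad_transpose (hH : ContDiff ℝ 2 H) (x : Fin n → ℝ) :
    (jac (grad H) x)ᵀ = jac (grad H) x := by
  ext μ ν
  simp only [transpose_apply, jac, (hasFDerivAt_grad hH x).fderiv]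
  exact (hH.contDiffAt.isSymmSndFDerivAt (by simp)).eq _ _

end Gradient

section RungeKutta

variable {m ι R : Type*} [Fintype m] [DecidableEq m] [Fintype ι] [CommRing R]

lemma sum_sum_smul_of_symplectic {M : Type*} [AddCommMonoid M] [Module R M]
    {A : Matrix ι ι R} {b : ι → R} (hsymp : ∀ i j, b i * A i j + b j * A j i = b i * b j)
    (B : ι → ι → M) :
    ∑ i, ∑ j, (b i * b j) • B i j = ∑ i, ∑ j, (b i * A i j) • (B i j + B j i) := by
  simp only [smul_add, Finset.sum_add_distrib]
  conv_rhs => rw [Finset.sum_comm (f := fun i j => (b i * A i j) • B j i)]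
  simp only [← hsymp, add_smul, Finset.sum_add_distrib]

lemma rk_update_transpose_mul_mul (Λ : Matrix m m R) {A : Matrix ι ι R} {b : ι → R}
    (hsymp : ∀ i j, b i * A i j + b j * A j i = b i * b j) (h : R) (D : ι → Matrix m m R) :
    (1 + h • ∑ j, b j • D j)ᵀ * Λ * (1 + h • ∑ j, b j • D j) =
      Λ + h • ∑ i, b i • ((D i)ᵀ * Λ * (1 + h • ∑ j, A i j • D j) +
        (1 + h • ∑ j, A i j • D j)ᵀ * Λ * D i) := by
  set T := ∑ j, b j • D j
  have hT : Tᵀ * Λ * T = ∑ i, ∑ j, (b i * b j) • ((D i)ᵀ * Λ * D j) := by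
    simp only [T, transpose_sum, transpose_smul, Matrix.sum_mul, Matrix.mul_sum,
      Matrix.smul_mul, Matrix.mul_smul, Finset.smul_sum, smul_smul]
    rw [Finset.sum_comm]
    simp only [mul_comm]
  have hstage : ∑ i, b i • ((D i)ᵀ * Λ * (1 + h • ∑ j, A i j • D j) +
      (1 + h • ∑ j, A i j • D j)ᵀ * Λ * D i) = Tᵀ * Λ + Λ * T +
        h • ∑ i, ∑ j, (b i * A i j) • ((D i)ᵀ * Λ * D j + (D j)ᵀ * Λ * D i) := by
    simp only [T, transpose_add, transpose_smul, transpose_sum, transpose_one, Matrix.add_mul,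
      Matrix.mul_add, Matrix.sum_mul, Matrix.mul_sum, Matrix.smul_mul, Matrix.mul_smul,
      Matrix.one_mul, Matrix.mul_one, smul_add, Finset.smul_sum, smul_smul,
      Finset.sum_add_distrib, mul_left_comm (b _) h]
    abel
  rw [hstage, ← sum_sum_smul_of_symplectic hsymp, ← hT]
  simp only [transpose_add, transpose_smul, transpose_one, Matrix.add_mul, Matrix.mul_add,
    Matrix.one_mul, Matrix.mul_one, Matrix.smul_mul, Matrix.mul_smul]
  module

end RungeKutta

section MatrixAlgebra

variable {m R : Type*} [Fintype m] [CommRing R]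

lemma transpose_mul_mul_add_transpose_mul_mul_eq_zero {Λ D S K : Matrix m m R}
    (hΛ : Λᵀ = -Λ) (hK : Kᵀ = K) (hD : Λ * D = K * S) :
    Dᵀ * Λ * S + Sᵀ * Λ * D = 0 := by
  have hDΛ : Dᵀ * Λ = -(Sᵀ * K) := by
    rw [← hK, ← transpose_mul, ← hD, transpose_mul, hΛ, Matrix.mul_neg, neg_neg]
  rw [hDΛ, Matrix.mul_assoc Sᵀ, hD, Matrix.neg_mul, Matrix.mul_assoc, neg_add_cancel]

lemma mul_inv_mul_transpose_eq_inv [DecidableEq m] {Λ M : Matrix m m R} (hΛ : IsUnit Λ.det)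
    (hM : Mᵀ * Λ * M = Λ) : M * Λ⁻¹ * Mᵀ = Λ⁻¹ := by
  have hMdet : IsUnit M.det := by
    have hdet := congrArg det hM
    rw [det_mul, det_mul, det_transpose] at hdet
    exact isUnit_of_mul_isUnit_right (hdet ▸ hΛ)
  calc M * Λ⁻¹ * Mᵀ = M * (Mᵀ * Λ * M)⁻¹ * Mᵀ := by rw [hM]
    _ = M * M⁻¹ * Λ⁻¹ * (Mᵀ⁻¹ * Mᵀ) := by simp only [Matrix.mul_inv_rev, Matrix.mul_assoc]
    _ = Λ⁻¹ := by
      rw [Matrix.mul_nonsing_inv _ hMdet, Matrix.nonsing_inv_mul _ (by rwa [det_transpose]),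
        Matrix.one_mul, Matrix.mul_one]

end MatrixAlgebra

theorem vrk_is_poisson_integrator_general
    {n s : ℕ}
    (H : (Fin n → ℝ) → ℝ) (hH : ContDiff ℝ (⊤ : ℕ∞) H)
    (Λ : Matrix (Fin n) (Fin n) ℝ) (hΛinv : IsUnit Λ.det) (hΛanti : Λᵀ = -Λ)
    (A : Matrix (Fin s) (Fin s) ℝ) (b : Fin s → ℝ)
    (hsymp : ∀ i j, b i * A i j + b j * A j i = b i * b j)
    (h : ℝ)
    -- the internal stages and the one-step map `F_h : q ↦ q̄`
    (Qs Qd : (Fin n → ℝ) → Fin s → (Fin n → ℝ))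
    (F : (Fin n → ℝ) → (Fin n → ℝ))
    (hQsdiff : ∀ i, Differentiable ℝ (fun q => Qs q i))
    (hQddiff : ∀ i, Differentiable ℝ (fun q => Qd q i))
    (heq1 : ∀ q i, Λ *ᵥ Qd q i = grad H (Qs q i))
    (heq2 : ∀ q i, Qs q i = q + h • ∑ j, A i j • Qd q j)
    (heq3 : ∀ q, F q = q + h • ∑ j, b j • Qd q j) :
    ∀ q : Fin n → ℝ, jac F q * Λ⁻¹ * (jac F q)ᵀ = Λ⁻¹ := by
  intro q
  have hH2 : ContDiff ℝ 2 H := hH.of_le (WithTop.coe_le_coe.mpr le_top)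
  set D := fun j => jac (fun x => Qd x j) q
  have hstage i : jac (fun x => Qs x i) q = 1 + h • ∑ j, A i j • D j := by
    simp_rw [heq2]
    exact jac_add_smul_sum (fun j => hQddiff j q) h _
  have hlinearized i : Λ * D i = jac (grad H) (Qs q i) * jac (fun x => Qs x i) q := by
    rw [← jac_mulVec Λ (hQddiff i q), funext fun x => heq1 x i]
    exact jac_comp ((hasFDerivAt_grad hH2 _).differentiableAt) (hQsdiff i q)
  have hF : jac F q = 1 + h • ∑ j, b j • D j := by
    rw [funext heq3]
    exact jac_add_smul_sum (fun j => hQddiff j q) h b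
  refine mul_inv_mul_transpose_eq_inv hΛinv ?_
  rw [hF, rk_update_transpose_mul_mul Λ hsymp, Finset.sum_eq_zero, smul_zero, add_zero]
  intro i _
  rw [← hstage, transpose_mul_mul_add_transpose_mul_mul_eq_zero hΛanti
    (jac_grad_transpose hH2 _) (hlinearized i), smul_zero]

/-- For `α(q) = −(1/2)Λq` with `Λ` constant, invertible and antisymmetric, an invertible
Runge–Kutta matrix `A` whose coefficients satisfy `bᵢaᵢⱼ + bⱼaⱼᵢ = bᵢbⱼ`, and consistent
momentum `p = −(1/2)Λq`, the Runge–Kutta scheme is a Poisson integrator for the Poisson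
system `q̇ = Λ⁻¹∇H(q)` with constant structure matrix `Λ⁻¹`: the induced one-step map
`F_h : q ↦ q̄` satisfies `DF_h(q) Λ⁻¹ DF_h(q)ᵀ = Λ⁻¹`. -/
theorem vrk_is_poisson_integrator
    {n s : ℕ} (hn : Even n)
    (H : (Fin n → ℝ) → ℝ) (hH : ContDiff ℝ (⊤ : ℕ∞) H)
    (Λ : Matrix (Fin n) (Fin n) ℝ) (hΛinv : IsUnit Λ.det) (hΛanti : Λᵀ = -Λ)
    (A : Matrix (Fin s) (Fin s) ℝ) (b : Fin s → ℝ) (hA : IsUnit A.det)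
    (hsymp : ∀ i j, b i * A i j + b j * A j i = b i * b j)
    (h : ℝ) (hh : 0 < h)
    -- the internal stages and the one-step map `F_h : q ↦ q̄`
    (Qs Qd : (Fin n → ℝ) → Fin s → (Fin n → ℝ))
    (F : (Fin n → ℝ) → (Fin n → ℝ))
    (hQsdiff : ∀ i, Differentiable ℝ (fun q => Qs q i))
    (hQddiff : ∀ i, Differentiable ℝ (fun q => Qd q i))
    (hFdiff : Differentiable ℝ F)
    (heq1 : ∀ q i, Λ *ᵥ Qd q i = grad H (Qs q i))
    (heq2 : ∀ q i, Qs q i = q + h • ∑ j, A i j • Qd q j)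
    (heq3 : ∀ q, F q = q + h • ∑ j, b j • Qd q j)
    -- the momenta, on the primary constraint `p = −(1/2)Λq`
    (p : (Fin n → ℝ) → (Fin n → ℝ))
    (hp : ∀ q, p q = -(((1:ℝ)/2) • (Λ *ᵥ q))) :
    ∀ q : Fin n → ℝ, jac F q * Λ⁻¹ * (jac F q)ᵀ = Λ⁻¹ :=
  vrk_is_poisson_integrator_general H hH Λ hΛinv hΛanti A b hsymp h Qs Qd F hQsdiff hQddiff heq1
    heq2 heq3
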